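/- arXiv:1008.0734 — 2 statements merged into one kernel-verified Lean document; each statement's English description precedes it below -/
import Mathlib

section
/- If ω₁, ω₂, ω₃ ∈ [2, 4] and α, β ∈ [−1, 1], then ∂²/∂α² det M(ω, α, β) ≥ 0, i.e., the second derivative in α of the determinant of M(ω, α, β) is nonnegative. -/
open Matrix

/-- The `3 × 3` symmetric matrix `M(ω, α, β)`. -/
noncomputable def Mmat (ω₁ ω₂ ω₃ α β : ℝ) : Matrix (Fin 3) (Fin 3) ℝ :=
  !![3 + 1 / 2 * ω₁ * α ^ 2 + 1 / 2 * ω₂ * β ^ 2, ω₁ * α, ω₂ * β;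
     ω₁ * α, 1 / 2 * ω₁ + 3 * α ^ 2 + 1 / 2 * ω₃ * β ^ 2, ω₃ * α * β;
     ω₂ * β, ω₃ * α * β, 1 / 2 * ω₂ + 1 / 2 * ω₃ * α ^ 2 + 3 * β ^ 2]

/-!
As a function of `α`, `det M(ω, α, β)` is an even sextic `c₀ + c₂ α² + c₄ α⁴ + c₆ α⁶`, whose
second derivative `2 c₂ + 12 c₄ α² + 30 c₆ α⁴` is nonnegative as soon as `c₂, c₄, c₆ ≥ 0`.
Here `c₆ = 3/4 ω₁ω₃`, while `c₂` and `c₄` are combinations, with coefficients that are powers of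
`β²`, of `12 + ω₁ω₂ω₃ - (ω₁² + ω₂² + ω₃²)` and of the cubics `12 b + 2 a c - a² b` for permutations
`(a, b, c)` of `(ω₁, ω₂, ω₃)`, all nonnegative on the box `[2, 4]³`.
-/

theorem iteratedDeriv_two_even_sextic (a b c d x : ℝ) :
    iteratedDeriv 2 (fun x : ℝ => a + b * x ^ 2 + c * x ^ 4 + d * x ^ 6) x =
      2 * b + 12 * c * x ^ 2 + 30 * d * x ^ 4 := by
  have hderiv : deriv (fun x : ℝ => a + b * x ^ 2 + c * x ^ 4 + d * x ^ 6) =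
      fun x => 2 * b * x + 4 * c * x ^ 3 + 6 * d * x ^ 5 := by
    funext x
    simp (disch := fun_prop)
    ring
  rw [iteratedDeriv_succ, iteratedDeriv_one, hderiv]
  simp (disch := fun_prop)
  ring

theorem iteratedDeriv_two_even_sextic_nonneg (a x : ℝ) {b c d : ℝ} (hb : 0 ≤ b) (hc : 0 ≤ c)
    (hd : 0 ≤ d) :
    0 ≤ iteratedDeriv 2 (fun x : ℝ => a + b * x ^ 2 + c * x ^ 4 + d * x ^ 6) x := by
  rw [iteratedDeriv_two_even_sextic]
  positivity

theorem sq_mul_le_twelve_mul_add {a b c : ℝ} (ha₀ : 0 ≤ a) (ha₄ : a ≤ 4) (hb₀ : 0 ≤ b)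
    (hb₄ : b ≤ 4) (hc : 2 ≤ c) :
    a ^ 2 * b ≤ 12 * b + 2 * a * c := by
  rcases le_total (a ^ 2) 12 with ha | ha
  · nlinarith [mul_nonneg ha₀ (sub_nonneg.2 hc)]
  · -- `(a² - 12) b ≤ 4 (a² - 12) = 4 a - 4 (4 - a)(3 + a) ≤ 2 a c`
    nlinarith [mul_nonneg (sub_nonneg.2 hb₄) (sub_nonneg.2 ha), mul_nonneg ha₀ (sub_nonneg.2 hc)]

theorem sq_add_sq_add_sq_le_twelve_add_mul {a b c : ℝ} (ha : a ∈ Set.Icc (2 : ℝ) 4)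
    (hb : b ∈ Set.Icc (2 : ℝ) 4) (hc : c ∈ Set.Icc (2 : ℝ) 4) :
    a ^ 2 + b ^ 2 + c ^ 2 ≤ 12 + a * b * c := by
  obtain ⟨ha₂, ha₄⟩ := ha
  obtain ⟨hb₂, hb₄⟩ := hb
  obtain ⟨hc₂, hc₄⟩ := hc
  -- `12 + abc - a² - b² - c² = a (b - 2)(c - 2) + (a - 2)² + (4 - (a - b)²) + (4 - (a - c)²)`
  nlinarith [mul_nonneg (mul_nonneg (by linarith : (0 : ℝ) ≤ a) (sub_nonneg.2 hb₂))
      (sub_nonneg.2 hc₂),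
    mul_nonneg (by linarith : (0 : ℝ) ≤ 2 + a - b) (by linarith : (0 : ℝ) ≤ 2 + b - a),
    mul_nonneg (by linarith : (0 : ℝ) ≤ 2 + a - c) (by linarith : (0 : ℝ) ≤ 2 + c - a)]

theorem det_Mmat (ω₁ ω₂ ω₃ α β : ℝ) :
    (Mmat ω₁ ω₂ ω₃ α β).det =
      (ω₁ + ω₃ * β ^ 2) / 2 * ((3 + ω₂ * β ^ 2 / 2) * (ω₂ / 2 + 3 * β ^ 2) - ω₂ ^ 2 * β ^ 2)
      + 3 / 8 * ((12 * ω₂ + 2 * ω₁ * ω₃ - ω₁ ^ 2 * ω₂)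
          + 6 * β ^ 2 * (12 + ω₁ * ω₂ * ω₃ - (ω₁ ^ 2 + ω₂ ^ 2 + ω₃ ^ 2))
          + β ^ 4 * (12 * ω₂ + 2 * ω₃ * ω₁ - ω₃ ^ 2 * ω₂)) * α ^ 2
      + 3 / 8 * ((12 * ω₃ + 2 * ω₁ * ω₂ - ω₁ ^ 2 * ω₃)
          + β ^ 2 * (12 * ω₁ + 2 * ω₃ * ω₂ - ω₃ ^ 2 * ω₁)) * α ^ 4
      + 3 / 4 * ω₁ * ω₃ * α ^ 6 := by
  rw [Mmat, det_fin_three]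
  simp only [of_apply, cons_val', cons_val_zero, cons_val_fin_one, cons_val_one, cons_val]
  ring

theorem second_deriv_det_M_nonneg_general (ω₁ ω₂ ω₃ α β : ℝ)
    (h₁ : ω₁ ∈ Set.Icc (2 : ℝ) 4) (h₂ : ω₂ ∈ Set.Icc (2 : ℝ) 4)
    (h₃ : ω₃ ∈ Set.Icc (2 : ℝ) 4) :
    0 ≤ iteratedDeriv 2 (fun α : ℝ => (Mmat ω₁ ω₂ ω₃ α β).det) α := by
  have cubic_nonneg (a b c : ℝ) (ha : a ∈ Set.Icc (2 : ℝ) 4) (hb : b ∈ Set.Icc (2 : ℝ) 4)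
      (hc : c ∈ Set.Icc (2 : ℝ) 4) : 0 ≤ 12 * b + 2 * a * c - a ^ 2 * b :=
    sub_nonneg.2 <| sq_mul_le_twelve_mul_add (by linarith [ha.1]) ha.2 (by linarith [hb.1]) hb.2
      hc.1
  have hB : 0 ≤ 12 + ω₁ * ω₂ * ω₃ - (ω₁ ^ 2 + ω₂ ^ 2 + ω₃ ^ 2) :=
    sub_nonneg.2 (sq_add_sq_add_sq_le_twelve_add_mul h₁ h₂ h₃)
  simp_rw [det_Mmat]
  refine iteratedDeriv_two_even_sextic_nonneg _ α ?_ ?_ ?_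
  · have := cubic_nonneg ω₁ ω₂ ω₃ h₁ h₂ h₃
    have := cubic_nonneg ω₃ ω₂ ω₁ h₃ h₂ h₁
    positivity
  · have := cubic_nonneg ω₁ ω₃ ω₂ h₁ h₃ h₂
    have := cubic_nonneg ω₃ ω₁ ω₂ h₃ h₁ h₂
    positivity
  · have := h₁.1
    have := h₃.1
    positivity

/-- For `ω₁, ω₂, ω₃ ∈ [2, 4]` and `α, β ∈ [−1, 1]`, the second derivative in
`α` of `det M(ω, α, β)` is nonnegative. -/
theorem second_deriv_det_M_nonneg (ω₁ ω₂ ω₃ α β : ℝ)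
    (h₁ : ω₁ ∈ Set.Icc (2 : ℝ) 4) (h₂ : ω₂ ∈ Set.Icc (2 : ℝ) 4)
    (h₃ : ω₃ ∈ Set.Icc (2 : ℝ) 4)
    (hα : α ∈ Set.Icc (-1 : ℝ) 1) (hβ : β ∈ Set.Icc (-1 : ℝ) 1) :
    0 ≤ iteratedDeriv 2 (fun α : ℝ => (Mmat ω₁ ω₂ ω₃ α β).det) α :=
  second_deriv_det_M_nonneg_general ω₁ ω₂ ω₃ α β h₁ h₂ h₃
end

section
/- Fix n ≥ 2 and suppose γ* is a real constant such that for every n×n real symmetric positive definite matrix A, the Kantorovich function K(x) = (xᵀAx)(xᵀA⁻¹x) is convex on ℝⁿ if and only if κ(A) ≤ γ*. Then √(5+2√6) ≤ γ* ≤ 3 + 2√2; moreover, if n = 3, then 2 + √3 ≤ γ* ≤ 3 + 2√2. -/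
/-!
For `A = diag(t, 1, …, 1)` with `t ≥ 1` one has `κ(A) = t` and, writing `x = (x₀, y)`,
`K(x) = x₀⁴ + μ x₀² ‖y‖² + ‖y‖⁴` with `μ = t + t⁻¹`. The planar quartic `s⁴ + μ s² w² + w⁴` is
convex iff `μ ≤ 6`, and it is monotone on the closed quadrant, so composing it with the convex
maps `x ↦ |x₀|` and `x ↦ ‖y‖` keeps it convex. Hence `K` is convex iff `t + t⁻¹ ≤ 6`, that is iff
`t ≤ 3 + 2√2`, and the threshold hypothesis applied to this family forces `γ = 3 + 2√2`.
-/

open Matrix Set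

def evenQuartic (μ s w : ℝ) : ℝ := s ^ 4 + μ * s ^ 2 * w ^ 2 + w ^ 4

section evenQuartic

variable {μ : ℝ}

@[simp]
theorem evenQuartic_abs_left (s w : ℝ) : evenQuartic μ |s| w = evenQuartic μ s w := by
  simp [evenQuartic, (by decide : Even 4).pow_abs]

@[simp]
theorem evenQuartic_abs_right (s w : ℝ) : evenQuartic μ s |w| = evenQuartic μ s w := by
  simp [evenQuartic, (by decide : Even 4).pow_abs]

theorem evenQuartic_le_evenQuartic (hμ : 0 ≤ μ) {s s' w w' : ℝ} (hs : 0 ≤ s) (hw : 0 ≤ w)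
    (hss' : s ≤ s') (hww' : w ≤ w') : evenQuartic μ s w ≤ evenQuartic μ s' w' := by
  unfold evenQuartic
  gcongr

theorem convexOn_evenQuartic_iff (hμ : 2 ≤ μ) :
    ConvexOn ℝ univ (fun p : ℝ × ℝ => evenQuartic μ p.1 p.2) ↔ μ ≤ 6 := by
  constructor
  · intro hconv
    by_contra! h6
    -- along `(1 + σ, 1 - σ)` the quartic is `(2 + μ) + (12 - 2μ) σ² + (2 + μ) σ⁴`, which for
    -- this `σ` lies below its value `2 + μ` at the midpoint `(1, 1)`
    set σ := √((μ - 6) / (μ + 2))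
    have hσ : σ ^ 2 * (μ + 2) = μ - 6 := by
      rw [Real.sq_sqrt (by positivity)]
      field_simp
    have hσ_pos : 0 < σ ^ 2 := by nlinarith
    have hmid := hconv.2 (mem_univ (1 + σ, 1 - σ)) (mem_univ (1 - σ, 1 + σ))
      (by norm_num : (0 : ℝ) ≤ 1 / 2) (by norm_num : (0 : ℝ) ≤ 1 / 2) (by norm_num)
    simp only [Prod.smul_mk, Prod.mk_add_mk, smul_eq_mul, evenQuartic] at hmid
    nlinarith
  · intro h6
    have h2 (L : ℝ × ℝ →ₗ[ℝ] ℝ) : ConvexOn ℝ univ fun p => L p ^ 2 :=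
      (even_two.convexOn_pow (𝕜 := ℝ)).comp_linearMap L
    have h4 (L : ℝ × ℝ →ₗ[ℝ] ℝ) : ConvexOn ℝ univ fun p => L p ^ 4 :=
      ((by decide : Even 4).convexOn_pow (𝕜 := ℝ)).comp_linearMap L
    have hsq := (h2 (LinearMap.fst ℝ ℝ ℝ)).add (h2 (LinearMap.snd ℝ ℝ ℝ))
    -- `evenQuartic μ = (6 - μ)/4 (s² + w²)² + (μ - 2)/8 ((s + w)⁴ + (s - w)⁴)`
    refine (((hsq.pow (fun _ _ => by dsimp; positivity) 2).smul
      (by linarith : 0 ≤ (6 - μ) / 4)).add (((h4 (LinearMap.fst ℝ ℝ ℝ + LinearMap.snd ℝ ℝ ℝ)).add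
        (h4 (LinearMap.fst ℝ ℝ ℝ - LinearMap.snd ℝ ℝ ℝ))).smul
          (by linarith : 0 ≤ (μ - 2) / 8))).congr fun p _ => ?_
    simp only [evenQuartic, Pi.add_apply, Pi.pow_apply, smul_eq_mul, LinearMap.add_apply,
      LinearMap.sub_apply, LinearMap.fst_apply, LinearMap.snd_apply]
    ring

theorem ConvexOn.evenQuartic_comp {E : Type*} [AddCommGroup E] [Module ℝ E] {s : Set E}
    {f g : E → ℝ} (hψ : ConvexOn ℝ univ fun p : ℝ × ℝ => evenQuartic μ p.1 p.2) (hμ : 0 ≤ μ)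
    (hf : ConvexOn ℝ s f) (hg : ConvexOn ℝ s g) (hf₀ : ∀ x ∈ s, 0 ≤ f x)
    (hg₀ : ∀ x ∈ s, 0 ≤ g x) : ConvexOn ℝ s fun x => evenQuartic μ (f x) (g x) := by
  refine ⟨hf.1, fun x hx y hy a b ha hb hab => ?_⟩
  have hxy := hf.1 hx hy ha hb hab
  calc evenQuartic μ (f (a • x + b • y)) (g (a • x + b • y))
      ≤ evenQuartic μ (a * f x + b * f y) (a * g x + b * g y) :=
        evenQuartic_le_evenQuartic hμ (hf₀ _ hxy) (hg₀ _ hxy) (hf.2 hx hy ha hb hab)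
          (hg.2 hx hy ha hb hab)
    _ ≤ a * evenQuartic μ (f x) (g x) + b * evenQuartic μ (f y) (g y) := by
        simpa using hψ.2 (mem_univ (f x, g x)) (mem_univ (f y, g y)) ha hb hab

end evenQuartic

noncomputable def kantorovich {ι : Type*} [Fintype ι] [DecidableEq ι] (A : Matrix ι ι ℝ)
    (x : ι → ℝ) : ℝ :=
  (x ⬝ᵥ (A *ᵥ x)) * (x ⬝ᵥ (A⁻¹ *ᵥ x))

theorem Matrix.IsHermitian.iSup_eigenvalues_diagonal {ι : Type*} [Fintype ι] [DecidableEq ι]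
    {d : ι → ℝ} (hA : (diagonal d).IsHermitian) : ⨆ i, hA.eigenvalues i = ⨆ i, d i := by
  rw [← sSup_range, ← sSup_range, ← hA.spectrum_real_eq_range_eigenvalues, spectrum_diagonal]

theorem Matrix.IsHermitian.iInf_eigenvalues_diagonal {ι : Type*} [Fintype ι] [DecidableEq ι]
    {d : ι → ℝ} (hA : (diagonal d).IsHermitian) : ⨅ i, hA.eigenvalues i = ⨅ i, d i := by
  rw [← sInf_range, ← sInf_range, ← hA.spectrum_real_eq_range_eigenvalues, spectrum_diagonal]

section DiagonalCons

variable {k : ℕ} {t : ℝ}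

theorem inv_diagonal_cons {K : Type*} [Field K] {a : K} (ha : a ≠ 0) :
    (diagonal (Fin.cons a 1 : Fin (k + 1) → K))⁻¹ = diagonal (Fin.cons a⁻¹ 1) := by
  refine inv_eq_right_inv ?_
  rw [diagonal_mul_diagonal, ← diagonal_one]
  congr 1
  ext i
  refine Fin.cases ?_ (fun _ => ?_) i <;> simp [ha]

theorem dotProduct_diagonal_cons_mulVec (x : Fin (k + 1) → ℝ) :
    x ⬝ᵥ (diagonal (Fin.cons t 1) *ᵥ x) = t * x 0 ^ 2 + ‖WithLp.toLp 2 (Fin.tail x)‖ ^ 2 := by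
  simp only [dotProduct, mulVec_diagonal, Fin.sum_univ_succ, Fin.cons_zero, Fin.cons_succ,
    Pi.one_apply, one_mul, EuclideanSpace.norm_sq_eq, Real.norm_eq_abs, sq_abs, ← sq,
    Fin.tail]
  ring

theorem kantorovich_diagonal_cons (ht : t ≠ 0) (x : Fin (k + 1) → ℝ) :
    kantorovich (diagonal (Fin.cons t 1)) x =
      evenQuartic (t + t⁻¹) (x 0) ‖WithLp.toLp 2 (Fin.tail x)‖ := by
  rw [kantorovich, inv_diagonal_cons ht, dotProduct_diagonal_cons_mulVec,
    dotProduct_diagonal_cons_mulVec, evenQuartic]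
  field_simp
  ring

theorem iSup_div_iInf_eigenvalues_diagonal_cons (ht : 1 ≤ t)
    (hA : (diagonal (Fin.cons t 1 : Fin (k + 2) → ℝ)).IsHermitian) :
    (⨆ i, hA.eigenvalues i) / (⨅ i, hA.eigenvalues i) = t := by
  rw [hA.iSup_eigenvalues_diagonal, hA.iInf_eigenvalues_diagonal, ← sSup_range, ← sInf_range,
    Fin.range_cons, Pi.one_def, range_const, csSup_pair, csInf_pair, sup_eq_left.2 ht,
    inf_eq_right.2 ht, div_one]

theorem add_inv_le_six_iff (ht : 1 ≤ t) : t + t⁻¹ ≤ 6 ↔ t ≤ 3 + 2 * √2 := by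
  have hsq : √2 ^ 2 = 2 := Real.sq_sqrt zero_le_two
  have hroots : t + t⁻¹ - 6 = (t - (3 + 2 * √2)) * ((t - (3 - 2 * √2)) / t) := by
    field_simp
    linear_combination 4 * hsq
  have hpos : 0 < (t - (3 - 2 * √2)) / t := by
    have : 1 < √2 := by nlinarith [Real.sqrt_nonneg 2]
    apply div_pos <;> linarith
  rw [← sub_nonpos, hroots, ← zero_mul ((t - (3 - 2 * √2)) / t),
    mul_le_mul_iff_of_pos_right hpos, sub_nonpos]

theorem convexOn_kantorovich_diagonal_cons_iff (ht : 0 < t) :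
    ConvexOn ℝ univ (kantorovich (diagonal (Fin.cons t 1 : Fin (k + 2) → ℝ))) ↔
      t + t⁻¹ ≤ 6 := by
  have h2 : 2 ≤ t + t⁻¹ := by
    have : t + t⁻¹ - 2 = (t - 1) ^ 2 / t := by field_simp; ring
    linarith [div_nonneg (sq_nonneg (t - 1)) ht.le]
  rw [← convexOn_evenQuartic_iff h2]
  constructor
  · intro h
    let L : ℝ × ℝ →ₗ[ℝ] Fin (k + 2) → ℝ := (LinearMap.fst ℝ ℝ ℝ).smulRight (Pi.single 0 1) +
      (LinearMap.snd ℝ ℝ ℝ).smulRight (Fin.cons 0 (Pi.single 0 1))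
    have hL (p : ℝ × ℝ) : Fin.tail (L p) = Pi.single 0 p.2 := by
      ext i
      simp [L, Fin.tail, Pi.single_apply]
    have hL₀ (p : ℝ × ℝ) : L p 0 = p.1 := by simp [L]
    refine (h.comp_linearMap L).congr fun p _ => ?_
    rw [Function.comp_apply, kantorovich_diagonal_cons ht.ne', hL, hL₀, PiLp.toLp_single,
      PiLp.norm_single, Real.norm_eq_abs, evenQuartic_abs_right]
  · intro h
    let T : (Fin (k + 2) → ℝ) →ₗ[ℝ] EuclideanSpace ℝ (Fin (k + 1)) :=
      (WithLp.linearEquiv 2 ℝ (Fin (k + 1) → ℝ)).symm.toLinearMap ∘ₗ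
        LinearMap.funLeft ℝ ℝ Fin.succ
    refine (h.evenQuartic_comp (by linarith)
      ((convexOn_norm convex_univ).comp_linearMap (LinearMap.proj 0))
      ((convexOn_norm convex_univ).comp_linearMap T) (fun _ _ => norm_nonneg _)
      (fun _ _ => norm_nonneg _)).congr fun x _ => ?_
    change evenQuartic _ ‖x 0‖ ‖WithLp.toLp 2 (Fin.tail x)‖ = _
    rw [kantorovich_diagonal_cons ht.ne', Real.norm_eq_abs, evenQuartic_abs_left]

end DiagonalCons

/-- Fix `n ≥ 2`, and suppose `γ*` is a constant such that for every `n × n`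
real symmetric positive definite matrix `A`, the Kantorovich function
`K(x) = (xᵀAx)(xᵀA⁻¹x)` is convex on `ℝⁿ` if and only if `κ(A) ≤ γ*`. Then
`√(5 + 2√6) ≤ γ* ≤ 3 + 2√2`; moreover, if `n = 3`, then `2 + √3 ≤ γ*`. -/
theorem condNumber_threshold_bounds {n : ℕ} (hn : 2 ≤ n) (γ : ℝ)
    (hγ : ∀ (A : Matrix (Fin n) (Fin n) ℝ) (hA : A.PosDef),
      ConvexOn ℝ Set.univ
          (fun x : Fin n → ℝ => (x ⬝ᵥ (A *ᵥ x)) * (x ⬝ᵥ (A⁻¹ *ᵥ x))) ↔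
        (⨆ i, hA.1.eigenvalues i) / (⨅ i, hA.1.eigenvalues i) ≤ γ) :
    Real.sqrt (5 + 2 * Real.sqrt 6) ≤ γ ∧ γ ≤ 3 + 2 * Real.sqrt 2 ∧
      (n = 3 → 2 + Real.sqrt 3 ≤ γ) := by
  obtain ⟨k, rfl⟩ : ∃ k, n = k + 2 := ⟨n - 2, by omega⟩
  have hthreshold (t : ℝ) (ht : 1 ≤ t) : t ≤ γ ↔ t ≤ 3 + 2 * √2 := by
    have hA : (diagonal (Fin.cons t 1 : Fin (k + 2) → ℝ)).PosDef :=
      PosDef.diagonal fun i => Fin.cases (by simp; linarith) (fun _ => by simp) i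
    calc t ≤ γ ↔ (⨆ i, hA.1.eigenvalues i) / (⨅ i, hA.1.eigenvalues i) ≤ γ := by
          rw [iSup_div_iInf_eigenvalues_diagonal_cons ht]
      _ ↔ ConvexOn ℝ univ (kantorovich (diagonal (Fin.cons t 1 : Fin (k + 2) → ℝ))) :=
          (hγ _ hA).symm
      _ ↔ t + t⁻¹ ≤ 6 := convexOn_kantorovich_diagonal_cons_iff (by linarith)
      _ ↔ t ≤ 3 + 2 * √2 := add_inv_le_six_iff ht
  have hsqrt2 : 1 ≤ √2 := Real.one_le_sqrt.2 (by norm_num)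
  have hsqrt3 : √3 ≤ 2 := Real.sqrt_le_iff.2 ⟨by norm_num, by norm_num⟩
  have hsqrt6 : √6 ≤ 3 := Real.sqrt_le_iff.2 ⟨by norm_num, by norm_num⟩
  have hlower : 3 + 2 * √2 ≤ γ := (hthreshold _ (by linarith)).2 le_rfl
  refine ⟨Real.sqrt_le_iff.2 ⟨by linarith, by nlinarith⟩, (hthreshold γ (by linarith)).1 le_rfl,
    fun _ => by linarith⟩
end
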